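/- Let g : ℝ → ℝ be four times continuously differentiable with g, g', g'', g''', g'''' ∈ L²(ℝ) and with g(x), g'(x), g''(x), g'''(x) all tending to 0 as |x| → ∞. Then ∫_ℝ |g'(x)|² · |g'''(x)| dx ≤ √2 · ‖g‖_{L²} · ‖g''‖_{L²}^{5/4} · ‖g''''‖_{L²}^{3/4}. -/

import Mathlib

open MeasureTheory Filter Set intervalIntegral

/-- The `L²(ℝ)` norm `(∫ℝ |g(x)|² dx)^(1/2)`. -/
noncomputable def L2Norm (g : ℝ → ℝ) : ℝ := (∫ x : ℝ, (g x) ^ 2) ^ ((1 : ℝ) / 2)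

/-- `g ∈ L²(ℝ)`, i.e. `∫ℝ |g(x)|² dx < ∞`. -/
def MemL2 (g : ℝ → ℝ) : Prop := MeasureTheory.Integrable fun x => (g x) ^ 2

/-!
Write `a k = ‖g⁽ᵏ⁾‖_{L²}`. Integrating by parts gives `a k ^ 2 ≤ a (k - 1) * a (k + 1)`, and
`g'(x)² = ∫_{-∞}^x 2 g' g''` gives `‖g'‖_∞² ≤ 2 a 1 a 2`. Hence
`∫ |g'|² |g'''| ≤ ‖g'‖_∞ a 1 a 3 ≤ √(2 a 1 a 2) a 1 a 3`, and the log-convexity of `a`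
bounds this by `√2 a 0 (a 2)^{5/4} (a 4)^{3/4}`.
-/

lemma L2Norm_nonneg (u : ℝ → ℝ) : 0 ≤ L2Norm u :=
  Real.rpow_nonneg (integral_nonneg fun _ => sq_nonneg _) _

lemma L2Norm_sq (u : ℝ → ℝ) : L2Norm u ^ 2 = ∫ x : ℝ, u x ^ 2 := by
  rw [L2Norm, ← Real.rpow_natCast, ← Real.rpow_mul (integral_nonneg fun _ => sq_nonneg _)]
  norm_num

lemma integral_abs_mul_le_L2Norm_mul {u v : ℝ → ℝ} (hu : MemLp u 2) (hv : MemLp v 2) :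
    ∫ x, |u x| * |v x| ≤ L2Norm u * L2Norm v := by
  have h := integral_mul_norm_le_Lp_mul_Lq .two_two (by simpa using hu) (by simpa using hv)
  simpa only [Real.norm_eq_abs, Real.rpow_two, sq_abs, L2Norm] using h

lemma abs_integral_mul_le_L2Norm_mul {u v : ℝ → ℝ} (hu : MemLp u 2) (hv : MemLp v 2) :
    |∫ x, u x * v x| ≤ L2Norm u * L2Norm v :=
  calc |∫ x, u x * v x| ≤ ∫ x, |u x * v x| := abs_integral_le_integral_abs
    _ = ∫ x, |u x| * |v x| := by simp only [abs_mul]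
    _ ≤ L2Norm u * L2Norm v := integral_abs_mul_le_L2Norm_mul hu hv

/-- Integration by parts; the boundary terms vanish because `f f'` is integrable. -/
lemma L2Norm_sq_le_of_hasDerivAt {f f' f'' : ℝ → ℝ} (hf : ∀ x, HasDerivAt f (f' x) x)
    (hf' : ∀ x, HasDerivAt f' (f'' x) x) (h0 : MemLp f 2) (h1 : MemLp f' 2) (h2 : MemLp f'' 2) :
    L2Norm f' ^ 2 ≤ L2Norm f * L2Norm f'' := by
  have hparts : ∫ x, f x * f'' x = -∫ x, f' x * f' x :=
    integral_mul_deriv_eq_deriv_mul_of_integrable (fun x _ => hf x) (fun x _ => hf' x)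
      (h0.integrable_mul h2) (h1.integrable_mul h1) (h0.integrable_mul h1)
  calc L2Norm f' ^ 2 = -∫ x, f x * f'' x := by
        rw [L2Norm_sq, hparts, neg_neg]; simp only [sq]
    _ ≤ |∫ x, f x * f'' x| := neg_le_abs _
    _ ≤ L2Norm f * L2Norm f'' := abs_integral_mul_le_L2Norm_mul h0 h2

lemma sq_le_two_mul_L2Norm_mul {f f' : ℝ → ℝ} (hf : ∀ x, HasDerivAt f (f' x) x)
    (h0 : MemLp f 2) (h1 : MemLp f' 2) (x : ℝ) :
    f x ^ 2 ≤ 2 * (L2Norm f * L2Norm f') := by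
  have hderiv : ∀ t, HasDerivAt (fun y => f y ^ 2) (2 * (f t * f' t)) t := fun t =>
    ((hf t).pow 2).congr_deriv (by ring)
  have hint : Integrable fun t => 2 * (f t * f' t) := (h0.integrable_mul h1).const_mul 2
  have habs : Integrable fun t => |f t| * |f' t| := by
    simpa only [Pi.mul_apply, abs_mul] using (h0.integrable_mul h1).abs
  -- `f²` and its derivative are integrable, so `f²` tends to `0`
  have hlim : Tendsto (fun y => f y ^ 2) atBot (nhds 0) :=
    tendsto_zero_of_hasDerivAt_of_integrableOn_Iic (a := x) (fun t _ => hderiv t)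
      hint.integrableOn h0.integrable_sq.integrableOn
  have hFTC : ∫ t in Iic x, 2 * (f t * f' t) = f x ^ 2 - 0 :=
    integral_Iic_of_hasDerivAt_of_tendsto' (fun t _ => hderiv t) hint.integrableOn hlim
  calc f x ^ 2 = 2 * ∫ t in Iic x, f t * f' t := by
        rw [← MeasureTheory.integral_const_mul, hFTC, sub_zero]
    _ ≤ 2 * |∫ t in Iic x, f t * f' t| := by gcongr; exact le_abs_self _
    _ ≤ 2 * ∫ t in Iic x, |f t| * |f' t| := by
        gcongr
        simpa only [abs_mul] using
          MeasureTheory.abs_integral_le_integral_abs (f := fun t => f t * f' t)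
    _ ≤ 2 * ∫ t, |f t| * |f' t| := by
        have := setIntegral_le_integral (s := Iic x) habs (.of_forall fun t => by positivity)
        linarith
    _ ≤ 2 * (L2Norm f * L2Norm f') := by gcongr; exact integral_abs_mul_le_L2Norm_mul h0 h1

lemma integral_sq_abs_mul_abs_le {u v : ℝ → ℝ} {K : ℝ} (hK : ∀ x, |u x| ≤ K)
    (hu : MemLp u 2) (hv : MemLp v 2) :
    ∫ x, |u x| ^ 2 * |v x| ≤ K * (L2Norm u * L2Norm v) := by
  have hint : Integrable fun x => |u x| * |v x| := by
    simpa only [Pi.mul_apply, abs_mul] using (hu.integrable_mul hv).abs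
  calc ∫ x, |u x| ^ 2 * |v x| ≤ ∫ x, K * (|u x| * |v x|) := by
        refine integral_mono_of_nonneg (.of_forall fun x => by positivity) (hint.const_mul K)
          (.of_forall fun x => ?_)
        dsimp only
        rw [sq, mul_assoc]
        exact mul_le_mul_of_nonneg_right (hK x) (by positivity)
    _ = K * ∫ x, |u x| * |v x| := MeasureTheory.integral_const_mul K _
    _ ≤ K * (L2Norm u * L2Norm v) :=
        mul_le_mul_of_nonneg_left (integral_abs_mul_le_L2Norm_mul hu hv)
          ((abs_nonneg _).trans (hK 0))

lemma sqrt_two_mul_mul_le_of_sq_le_mul {A B C D E : ℝ} (hA : 0 ≤ A) (hB : 0 ≤ B) (hC : 0 ≤ C)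
    (hE : 0 ≤ E) (hABC : B ^ 2 ≤ A * C) (hBCD : C ^ 2 ≤ B * D) (hCDE : D ^ 2 ≤ C * E) :
    √(2 * (B * C)) * (B * D) ≤ √2 * A * C ^ ((5 : ℝ) / 4) * E ^ ((3 : ℝ) / 4) := by
  have hB6 : B ^ 6 ≤ A ^ 3 * C ^ 3 := by
    simpa only [← pow_mul, mul_pow] using pow_le_pow_left₀ (sq_nonneg B) hABC 3
  have hD4 : D ^ 4 ≤ C ^ 2 * E ^ 2 := by
    simpa only [← pow_mul, mul_pow] using pow_le_pow_left₀ (sq_nonneg D) hCDE 2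
  have hC4 : C ^ 4 ≤ A * C ^ 2 * E :=
    calc C ^ 4 = (C ^ 2) ^ 2 := by ring
      _ ≤ (B * D) ^ 2 := pow_le_pow_left₀ (sq_nonneg C) hBCD 2
      _ = B ^ 2 * D ^ 2 := by ring
      _ ≤ (A * C) * (C * E) := mul_le_mul hABC hCDE (sq_nonneg D) (by positivity)
      _ = A * C ^ 2 * E := by ring
  have hpoly : B ^ 6 * C ^ 2 * D ^ 4 ≤ A ^ 4 * C ^ 5 * E ^ 3 :=
    calc B ^ 6 * C ^ 2 * D ^ 4 ≤ (A ^ 3 * C ^ 3) * C ^ 2 * (C ^ 2 * E ^ 2) := by gcongr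
      _ = C ^ 4 * (A ^ 3 * C ^ 3 * E ^ 2) := by ring
      _ ≤ (A * C ^ 2 * E) * (A ^ 3 * C ^ 3 * E ^ 2) := by gcongr
      _ = A ^ 4 * C ^ 5 * E ^ 3 := by ring
  have hrpow {t : ℝ} (n : ℕ) (ht : 0 ≤ t) : (t ^ ((n : ℝ) / 4)) ^ 4 = t ^ n := by
    rw [← Real.rpow_natCast _ 4, ← Real.rpow_mul ht, ← Real.rpow_natCast]; norm_num
  refine le_of_pow_le_pow_left₀ (n := 4) (by norm_num) (by positivity) ?_
  calc (√(2 * (B * C)) * (B * D)) ^ 4 = (√(2 * (B * C)) ^ 2) ^ 2 * (B * D) ^ 4 := by ring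
    _ = 4 * (B ^ 6 * C ^ 2 * D ^ 4) := by rw [Real.sq_sqrt (by positivity)]; ring
    _ ≤ 4 * (A ^ 4 * C ^ 5 * E ^ 3) := by gcongr
    _ = (√2 ^ 2) ^ 2 * A ^ 4 * (C ^ ((5 : ℕ) / 4 : ℝ)) ^ 4 * (E ^ ((3 : ℕ) / 4 : ℝ)) ^ 4 := by
        rw [Real.sq_sqrt zero_le_two, hrpow 5 hC, hrpow 3 hE]; ring
    _ = (√2 * A * C ^ ((5 : ℝ) / 4) * E ^ ((3 : ℝ) / 4)) ^ 4 := by push_cast; ring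

theorem cubic_term_estimate_general
    (g : ℝ → ℝ) (hg : ContDiff ℝ 4 g)
    (hL2 : MemL2 g) (hL2' : MemL2 (deriv g)) (hL2'' : MemL2 (iteratedDeriv 2 g))
    (hL2''' : MemL2 (iteratedDeriv 3 g)) (hL2'''' : MemL2 (iteratedDeriv 4 g)) :
    (∫ x : ℝ, |deriv g x| ^ 2 * |iteratedDeriv 3 g x|)
      ≤ Real.sqrt 2 * L2Norm g * L2Norm (iteratedDeriv 2 g) ^ ((5:ℝ)/4)
        * L2Norm (iteratedDeriv 4 g) ^ ((3:ℝ)/4) := by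
  have hderiv : ∀ k < 4, ∀ x,
      HasDerivAt (iteratedDeriv k g) (iteratedDeriv (k + 1) g x) x := fun k hk x => by
    rw [iteratedDeriv_succ]
    exact (hg.differentiable_iteratedDeriv k (by exact_mod_cast hk) x).hasDerivAt
  have hLp : ∀ k ≤ 4, MemL2 (iteratedDeriv k g) → MemLp (iteratedDeriv k g) 2 := fun k hk h =>
    (memLp_two_iff_integrable_sq
      (hg.continuous_iteratedDeriv k (by exact_mod_cast hk)).aestronglyMeasurable).2 h
  have h0 := hLp 0 (by norm_num) (by simpa using hL2)
  have h1 := hLp 1 (by norm_num) (by simpa using hL2')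
  have h2 := hLp 2 (by norm_num) hL2''
  have h3 := hLp 3 (by norm_num) hL2'''
  have h4 := hLp 4 (by norm_num) hL2''''
  have hd0 := hderiv 0 (by norm_num)
  have hd1 := hderiv 1 (by norm_num)
  have hd2 := hderiv 2 (by norm_num)
  have hd3 := hderiv 3 (by norm_num)
  have hsup x :
      |iteratedDeriv 1 g x| ≤ √(2 * (L2Norm (iteratedDeriv 1 g) * L2Norm (iteratedDeriv 2 g))) :=
    Real.abs_le_sqrt (sq_le_two_mul_L2Norm_mul hd1 h1 h2 x)
  rw [← iteratedDeriv_one]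
  refine (integral_sq_abs_mul_abs_le hsup h1 h3).trans ?_
  simpa only [iteratedDeriv_zero] using sqrt_two_mul_mul_le_of_sq_le_mul (L2Norm_nonneg _)
    (L2Norm_nonneg _) (L2Norm_nonneg _) (L2Norm_nonneg _)
    (L2Norm_sq_le_of_hasDerivAt hd0 hd1 h0 h1 h2) (L2Norm_sq_le_of_hasDerivAt hd1 hd2 h1 h2 h3)
    (L2Norm_sq_le_of_hasDerivAt hd2 hd3 h2 h3 h4)

/-- estimate (3.10). If `g ∈ C⁴` with `g, g', g'', g''', g'''' ∈ L²(ℝ)`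
and `g, g', g'', g''' → 0` as `|x| → ∞`, then
`∫ |g'|² |g'''| dx ≤ √2 ‖g‖ ‖g''‖^{5/4} ‖g''''‖^{3/4}`. -/
theorem cubic_term_estimate
    (g : ℝ → ℝ) (hg : ContDiff ℝ 4 g)
    (hL2 : MemL2 g) (hL2' : MemL2 (deriv g)) (hL2'' : MemL2 (iteratedDeriv 2 g))
    (hL2''' : MemL2 (iteratedDeriv 3 g)) (hL2'''' : MemL2 (iteratedDeriv 4 g))
    (hdecay : Tendsto g (cocompact ℝ) (nhds 0))
    (hdecay' : Tendsto (deriv g) (cocompact ℝ) (nhds 0))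
    (hdecay'' : Tendsto (iteratedDeriv 2 g) (cocompact ℝ) (nhds 0))
    (hdecay''' : Tendsto (iteratedDeriv 3 g) (cocompact ℝ) (nhds 0)) :
    (∫ x : ℝ, |deriv g x| ^ 2 * |iteratedDeriv 3 g x|)
      ≤ Real.sqrt 2 * L2Norm g * L2Norm (iteratedDeriv 2 g) ^ ((5:ℝ)/4)
        * L2Norm (iteratedDeriv 4 g) ^ ((3:ℝ)/4) :=
  cubic_term_estimate_general g hg hL2 hL2' hL2'' hL2''' hL2''''
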